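/- arXiv:2003.12761 — 3 statements merged into one kernel-verified Lean document; each statement's English description precedes it below -/
import Mathlib

section
/- (Convergence of the IMEX scheme, case ζ < γ) Let n_ξ ≥ 2, n_x ≥ 1 be integers, γ, ν, τ, h_ξ > 0 reals, A = (1+γτ) I_{n_ξ} − (τν/h_ξ²) Δ with Δ the n_ξ×n_ξ Neumann finite-difference Laplacian matrix. Let N : ℝ^{n_ξ×n_x} → ℝ^{n_ξ×n_x} satisfy |N(V) − N(U)|_∞ ≤ ζ |V − U|_∞ for all V, U, with constant ζ ≥ 0. Let (V^n) and (V_*^n) be sequences in ℝ^{n_ξ×n_x} with V^0 = V_*^0, satisfying A V^n = V^{n−1} + τ N(V^{n−1}) + τ G^{n−1} and A V_*^n = V_*^{n−1} + τ N(V_*^{n−1}) + τ G^{n−1} + τ R^{n−1} for all n ≥ 1, where |R^{n−1}|_∞ ≤ ω for a constant ω ≥ 0. If ζ < γ, then |V^n − V_*^n|_∞ ≤ ω/(γ − ζ) for every n ∈ ℕ. -/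
open Real Finset

/-- The `n × n` second-order centred finite-difference Laplacian incorporating
Neumann boundary conditions. -/
def neumannLaplacian (n : ℕ) : Matrix (Fin n) (Fin n) ℝ :=
  Matrix.of fun i j =>
    if (i : ℕ) = (j : ℕ) then -2
    else if (i : ℕ) = 0 ∧ (j : ℕ) = 1 then 2
    else if (i : ℕ) = n - 1 ∧ (j : ℕ) = n - 2 then 2
    else if (j : ℕ) + 1 = (i : ℕ) ∨ (i : ℕ) + 1 = (j : ℕ) then 1
    else 0

/-- The matrix norm induced by the vector `∞`-norm:
`|M|_∞ = max_i Σ_j |M i j|`. -/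
noncomputable def matInfNorm {m n : ℕ} (M : Matrix (Fin m) (Fin n) ℝ) : ℝ :=
  ⨆ i, ∑ j, |M i j|

lemma rowSum_le_matInfNorm {m n : ℕ} (M : Matrix (Fin m) (Fin n) ℝ) (i : Fin m) :
    ∑ j, |M i j| ≤ matInfNorm M :=
  le_ciSup (f := fun i => ∑ j, |M i j|) (Set.Finite.bddAbove (Set.finite_range _)) i

lemma matInfNorm_le {m n : ℕ} [Nonempty (Fin m)] {M : Matrix (Fin m) (Fin n) ℝ} {c : ℝ}
    (h : ∀ i, ∑ j, |M i j| ≤ c) : matInfNorm M ≤ c :=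
  ciSup_le h

lemma matInfNorm_nonneg {m n : ℕ} [Nonempty (Fin m)] (M : Matrix (Fin m) (Fin n) ℝ) :
    0 ≤ matInfNorm M := by
  obtain ⟨i⟩ := ‹Nonempty (Fin m)›
  exact le_trans (Finset.sum_nonneg fun j _ => abs_nonneg _) (rowSum_le_matInfNorm M i)

lemma matInfNorm_add_le {m n : ℕ} [Nonempty (Fin m)] (M N : Matrix (Fin m) (Fin n) ℝ) :
    matInfNorm (M + N) ≤ matInfNorm M + matInfNorm N := by
  apply matInfNorm_le
  intro i
  calc ∑ j, |(M + N) i j| ≤ ∑ j, (|M i j| + |N i j|) := by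
        apply Finset.sum_le_sum; intro j _; exact abs_add_le _ _
    _ = (∑ j, |M i j|) + ∑ j, |N i j| := Finset.sum_add_distrib
    _ ≤ _ := add_le_add (rowSum_le_matInfNorm M i) (rowSum_le_matInfNorm N i)

lemma matInfNorm_smul {m n : ℕ} [Nonempty (Fin m)] (c : ℝ) (M : Matrix (Fin m) (Fin n) ℝ) :
    matInfNorm (c • M) ≤ |c| * matInfNorm M := by
  apply matInfNorm_le
  intro i
  calc ∑ j, |(c • M) i j| = |c| * ∑ j, |M i j| := by
        rw [Finset.mul_sum]; apply Finset.sum_congr rfl; intro j _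
        simp [Matrix.smul_apply, abs_mul]
    _ ≤ _ := mul_le_mul_of_nonneg_left (rowSum_le_matInfNorm M i) (abs_nonneg c)

lemma delta_diag {n : ℕ} (i : Fin n) : neumannLaplacian n i i = -2 := by
  simp [neumannLaplacian]

lemma delta_offdiag_nonneg {n : ℕ} {i k : Fin n} (h : i ≠ k) : 0 ≤ neumannLaplacian n i k := by
  have h' : (i : ℕ) ≠ (k : ℕ) := fun hh => h (Fin.ext hh)
  simp only [neumannLaplacian, Matrix.of_apply]
  rw [if_neg h']
  split_ifs <;> norm_num

lemma delta_offdiag_sum {n : ℕ} (hn : 2 ≤ n) (i : Fin n) :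
    ∑ k ∈ Finset.univ.erase i, neumannLaplacian n i k = 2 := by
  have hi := i.isLt
  rcases Nat.lt_or_ge (i : ℕ) 1 with h0 | h1
  · -- i = 0
    have hi0 : (i : ℕ) = 0 := by omega
    have h1n : (1 : ℕ) < n := by omega
    rw [Finset.sum_eq_single_of_mem (⟨1, h1n⟩ : Fin n)]
    · simp [neumannLaplacian, hi0]
    · exact Finset.mem_erase.2 ⟨fun h => by simp [Fin.ext_iff, hi0] at h, Finset.mem_univ _⟩
    · intro b hb hb1
      have hbv : (b : ℕ) ≠ 0 := fun h => (Finset.mem_erase.1 hb).1 (Fin.ext (by omega))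
      have hbv1 : (b : ℕ) ≠ 1 := fun h => hb1 (Fin.ext (by simpa using h))
      simp only [neumannLaplacian, Matrix.of_apply]
      split_ifs <;> (try norm_num) <;> omega
  · rcases Nat.lt_or_ge (i : ℕ) (n - 1) with hmid | hlast
    · -- middle: two entries of value 1
      obtain ⟨a, hav⟩ : ∃ a : Fin n, (a : ℕ) = (i : ℕ) - 1 := ⟨⟨(i : ℕ) - 1, by omega⟩, rfl⟩
      obtain ⟨b, hbv2⟩ : ∃ b : Fin n, (b : ℕ) = (i : ℕ) + 1 := ⟨⟨(i : ℕ) + 1, by omega⟩, rfl⟩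
      have hane : a ≠ i := fun h => by rw [Fin.ext_iff, hav] at h; omega
      have hbne : b ≠ i := fun h => by rw [Fin.ext_iff, hbv2] at h; omega
      have hab : a ≠ b := fun h => by rw [Fin.ext_iff, hav, hbv2] at h; omega
      have key : ∀ k ∈ Finset.univ.erase i, neumannLaplacian n i k =
          (if k = a then (1:ℝ) else 0) + (if k = b then 1 else 0) := by
        intro k hk
        have hki : (k : ℕ) ≠ (i : ℕ) := fun h => (Finset.mem_erase.1 hk).1 (Fin.ext h)
        simp only [neumannLaplacian, Matrix.of_apply, Fin.ext_iff, hav, hbv2]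
        split_ifs <;> (try norm_num) <;> omega
      rw [Finset.sum_congr rfl key, Finset.sum_add_distrib]
      rw [Finset.sum_ite_eq' _ a, Finset.sum_ite_eq' _ b]
      rw [if_pos (Finset.mem_erase.2 ⟨hane, Finset.mem_univ _⟩),
          if_pos (Finset.mem_erase.2 ⟨hbne, Finset.mem_univ _⟩)]
      norm_num
    · -- i = n - 1
      have hival : (i : ℕ) = n - 1 := by omega
      have h2n : n - 2 < n := by omega
      obtain ⟨c, hcv⟩ : ∃ c : Fin n, (c : ℕ) = n - 2 := ⟨⟨n - 2, h2n⟩, rfl⟩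
      have hcne : c ≠ i := fun h => by rw [Fin.ext_iff, hcv] at h; omega
      rw [Finset.sum_eq_single_of_mem c (Finset.mem_erase.2 ⟨hcne, Finset.mem_univ _⟩)]
      · simp only [neumannLaplacian, Matrix.of_apply]
        split_ifs <;> (try norm_num) <;> omega
      · intro k hk hkc
        have hki : (k : ℕ) ≠ (i : ℕ) := fun h => (Finset.mem_erase.1 hk).1 (Fin.ext h)
        have hkcv : (k : ℕ) ≠ n - 2 := fun h => hkc (Fin.ext (by rw [h, hcv]))
        have hkn := k.isLt
        simp only [neumannLaplacian, Matrix.of_apply]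
        split_ifs <;> (try norm_num) <;> omega

lemma mul_lower {n m : ℕ} (hn : 2 ≤ n) (c μ : ℝ) (hc : 0 ≤ c) (hμ : 0 ≤ μ)
    (M : Matrix (Fin n) (Fin m) ℝ) :
    c * matInfNorm M ≤
      matInfNorm ((c • (1 : Matrix (Fin n) (Fin n) ℝ) - μ • neumannLaplacian n) * M) := by
  haveI hne : Nonempty (Fin n) := ⟨⟨0, by omega⟩⟩
  obtain ⟨i₀, hi₀⟩ := Finite.exists_max (fun i : Fin n => ∑ j, |M i j|)
  have hR : matInfNorm M = ∑ j, |M i₀ j| :=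
    le_antisymm (matInfNorm_le hi₀) (rowSum_le_matInfNorm M i₀)
  set A := (c • (1 : Matrix (Fin n) (Fin n) ℝ) - μ • neumannLaplacian n) with hAdef
  have entry : ∀ j, (A * M) i₀ j
      = (c + 2*μ) * M i₀ j
        - μ * ∑ k ∈ Finset.univ.erase i₀, neumannLaplacian n i₀ k * M k j := by
    intro j
    rw [Matrix.mul_apply, ← Finset.add_sum_erase _ _ (Finset.mem_univ i₀)]
    have h1 : A i₀ i₀ = c + 2*μ := by
      simp [hAdef, Matrix.sub_apply, Matrix.smul_apply, Matrix.one_apply_eq, delta_diag]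
      ring
    have h2 : ∀ k ∈ Finset.univ.erase i₀,
        A i₀ k * M k j = -(μ * (neumannLaplacian n i₀ k * M k j)) := by
      intro k hk
      have hki : i₀ ≠ k := (Finset.ne_of_mem_erase hk).symm
      simp [hAdef, Matrix.sub_apply, Matrix.smul_apply, Matrix.one_apply_ne hki]
      ring
    rw [h1, Finset.sum_congr rfl h2, Finset.sum_neg_distrib, Finset.mul_sum]
    ring
  have hb : ∀ j, (c + 2*μ) * |M i₀ j|
      - μ * ∑ k ∈ Finset.univ.erase i₀, neumannLaplacian n i₀ k * |M k j|
      ≤ |(A * M) i₀ j| := by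
    intro j
    rw [entry j]
    have t1 : |(c + 2*μ) * M i₀ j| = (c + 2*μ) * |M i₀ j| := by
      rw [abs_mul, abs_of_nonneg (by linarith)]
    have t2 : |μ * ∑ k ∈ Finset.univ.erase i₀, neumannLaplacian n i₀ k * M k j|
        ≤ μ * ∑ k ∈ Finset.univ.erase i₀, neumannLaplacian n i₀ k * |M k j| := by
      rw [abs_mul, abs_of_nonneg hμ]
      apply mul_le_mul_of_nonneg_left _ hμ
      refine le_trans (Finset.abs_sum_le_sum_abs _ _) ?_
      apply Finset.sum_le_sum
      intro k hk
      have hΔ : 0 ≤ neumannLaplacian n i₀ k :=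
        delta_offdiag_nonneg ((Finset.ne_of_mem_erase hk).symm)
      rw [abs_mul, abs_of_nonneg hΔ]
    calc (c + 2*μ) * |M i₀ j|
          - μ * ∑ k ∈ Finset.univ.erase i₀, neumannLaplacian n i₀ k * |M k j|
        ≤ |(c + 2*μ) * M i₀ j|
          - |μ * ∑ k ∈ Finset.univ.erase i₀, neumannLaplacian n i₀ k * M k j| := by
          rw [t1]; linarith
      _ ≤ _ := abs_sub_abs_le_abs_sub _ _
  have hswap : ∑ j, ∑ k ∈ Finset.univ.erase i₀, neumannLaplacian n i₀ k * |M k j|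
      = ∑ k ∈ Finset.univ.erase i₀, neumannLaplacian n i₀ k * ∑ j, |M k j| := by
    rw [Finset.sum_comm]
    exact Finset.sum_congr rfl fun k _ => (Finset.mul_sum _ _ _).symm
  have hbd : ∑ k ∈ Finset.univ.erase i₀, neumannLaplacian n i₀ k * ∑ j, |M k j|
      ≤ 2 * matInfNorm M := by
    calc ∑ k ∈ Finset.univ.erase i₀, neumannLaplacian n i₀ k * ∑ j, |M k j|
        ≤ ∑ k ∈ Finset.univ.erase i₀, neumannLaplacian n i₀ k * matInfNorm M := by
          apply Finset.sum_le_sum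
          intro k hk
          exact mul_le_mul_of_nonneg_left (rowSum_le_matInfNorm M k)
            (delta_offdiag_nonneg ((Finset.ne_of_mem_erase hk).symm))
      _ = 2 * matInfNorm M := by rw [← Finset.sum_mul, delta_offdiag_sum hn]
  have hmain : (c + 2*μ) * matInfNorm M - 2*μ * matInfNorm M ≤ ∑ j, |(A * M) i₀ j| := by
    calc (c + 2*μ) * matInfNorm M - 2*μ * matInfNorm M
        ≤ (c + 2*μ) * (∑ j, |M i₀ j|)
          - μ * ∑ k ∈ Finset.univ.erase i₀, neumannLaplacian n i₀ k * ∑ j, |M k j| := by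
          rw [← hR]
          nlinarith [hbd, hμ]
      _ = ∑ j, ((c + 2*μ) * |M i₀ j|
          - μ * ∑ k ∈ Finset.univ.erase i₀, neumannLaplacian n i₀ k * |M k j|) := by
          rw [Finset.sum_sub_distrib, ← Finset.mul_sum, ← hswap, ← Finset.mul_sum]
      _ ≤ ∑ j, |(A * M) i₀ j| := Finset.sum_le_sum fun j _ => hb j
  calc c * matInfNorm M = (c + 2*μ) * matInfNorm M - 2*μ * matInfNorm M := by ring
    _ ≤ ∑ j, |(A * M) i₀ j| := hmain
    _ ≤ matInfNorm (A * M) := rowSum_le_matInfNorm _ i₀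


/-- (Convergence of the IMEX scheme, case `ζ < γ`.)
`|Vⁿ - V*ⁿ|_∞ ≤ ω/(γ - ζ)` for every `n`. -/
theorem IMEX_convergence_subcritical (nξ nx : ℕ) (hnξ : 2 ≤ nξ) (hnx : 1 ≤ nx)
    (γ ν τ hξ ζ ω : ℝ) (hγ : 0 < γ) (hν : 0 < ν) (hτ : 0 < τ) (hhξ : 0 < hξ)
    (hζ : 0 ≤ ζ) (hω : 0 ≤ ω)
    (A : Matrix (Fin nξ) (Fin nξ) ℝ)
    (hA : A = (1 + γ * τ) • (1 : Matrix (Fin nξ) (Fin nξ) ℝ)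
            - (τ * ν / hξ ^ 2) • neumannLaplacian nξ)
    (N : Matrix (Fin nξ) (Fin nx) ℝ → Matrix (Fin nξ) (Fin nx) ℝ)
    (hN : ∀ V U, matInfNorm (N V - N U) ≤ ζ * matInfNorm (V - U))
    (V Vs G R : ℕ → Matrix (Fin nξ) (Fin nx) ℝ)
    (h0 : V 0 = Vs 0)
    (hV : ∀ n : ℕ, A * V (n + 1) = V n + τ • N (V n) + τ • G n)
    (hVs : ∀ n : ℕ, A * Vs (n + 1) = Vs n + τ • N (Vs n) + τ • G n + τ • R n)
    (hR : ∀ n : ℕ, matInfNorm (R n) ≤ ω)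
    (hζγ : ζ < γ) :
    ∀ n : ℕ, matInfNorm (V n - Vs n) ≤ ω / (γ - ζ) := by
  haveI : Nonempty (Fin nξ) := ⟨⟨0, by omega⟩⟩
  have hd : 0 < γ - ζ := by linarith
  intro n
  induction n with
  | zero =>
    rw [h0, sub_self]
    have : matInfNorm (0 : Matrix (Fin nξ) (Fin nx) ℝ) = 0 := by simp [matInfNorm]
    rw [this]
    positivity
  | succ n ih =>
    have hE : A * (V (n+1) - Vs (n+1))
        = (V n - Vs n) + τ • (N (V n) - N (Vs n)) + (-τ) • R n := by
      rw [Matrix.mul_sub, hV n, hVs n, smul_sub, neg_smul]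
      abel
    have key := mul_lower hnξ (1 + γ * τ) (τ * ν / hξ ^ 2)
      (by positivity) (by positivity) (V (n+1) - Vs (n+1))
    rw [← hA, hE] at key
    have b1 : matInfNorm ((V n - Vs n) + τ • (N (V n) - N (Vs n)) + (-τ) • R n)
        ≤ matInfNorm (V n - Vs n) + τ * (ζ * matInfNorm (V n - Vs n)) + τ * ω := by
      refine le_trans (matInfNorm_add_le _ _) ?_
      refine add_le_add (le_trans (matInfNorm_add_le _ _) (add_le_add le_rfl ?_)) ?_
      · refine le_trans (matInfNorm_smul τ _) ?_
        rw [abs_of_pos hτ]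
        exact mul_le_mul_of_nonneg_left (hN _ _) hτ.le
      · refine le_trans (matInfNorm_smul (-τ) _) ?_
        rw [abs_neg, abs_of_pos hτ]
        exact mul_le_mul_of_nonneg_left (hR n) hτ.le
    have e0 : 0 ≤ matInfNorm (V n - Vs n) := matInfNorm_nonneg _
    have e0' : 0 ≤ matInfNorm (V (n+1) - Vs (n+1)) := matInfNorm_nonneg _
    have hω' : ω = (ω / (γ - ζ)) * (γ - ζ) := by field_simp
    have hkey2 : (1 + γ * τ) * matInfNorm (V (n+1) - Vs (n+1))
        ≤ matInfNorm (V n - Vs n) + τ * (ζ * matInfNorm (V n - Vs n)) + τ * ω :=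
      le_trans key b1
    rw [le_div_iff₀ hd] at ih ⊢
    have hp : (0:ℝ) < 1 + γ * τ := by positivity
    have h1 := mul_le_mul_of_nonneg_right hkey2 hd.le
    have h2 := mul_le_mul_of_nonneg_left ih (show (0:ℝ) ≤ 1 + τ * ζ by positivity)
    nlinarith [h1, h2, hp, e0, e0', hτ, hd]
end

section
/- (Convergence of the IMEX scheme, case ζ = γ) Let n_ξ ≥ 2, n_x ≥ 1 be integers, γ, ν, τ, h_ξ > 0 reals, A = (1+γτ) I_{n_ξ} − (τν/h_ξ²) Δ with Δ the n_ξ×n_ξ Neumann finite-difference Laplacian matrix. Let N : ℝ^{n_ξ×n_x} → ℝ^{n_ξ×n_x} satisfy |N(V) − N(U)|_∞ ≤ ζ |V − U|_∞ for all V, U, with constant ζ ≥ 0. Let (V^n) and (V_*^n) be sequences in ℝ^{n_ξ×n_x} with V^0 = V_*^0, satisfying A V^n = V^{n−1} + τ N(V^{n−1}) + τ G^{n−1} and A V_*^n = V_*^{n−1} + τ N(V_*^{n−1}) + τ G^{n−1} + τ R^{n−1} for all n ≥ 1, where |R^{n−1}|_∞ ≤ ω for a constant ω ≥ 0. If ζ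 = γ, then for every n with 1 ≤ n ≤ n_t one has |V^n − V_*^n|_∞ ≤ T ω/(1 + γτ), where T = n_t τ. -/
/-!
With `c = τν/h_ξ²` the implicit matrix is `A = (1 + γτ + 2c) I - c (Δ + 2I)`, and `Δ + 2I` has
`∞`-operator norm at most `2`, so `(1 + γτ) |E|_∞ ≤ |A E|_∞`. Subtracting the two schemes, the
error `eⁿ = Vⁿ - V*ⁿ` satisfies `A eⁿ⁺¹ = eⁿ + τ (N(Vⁿ) - N(V*ⁿ)) - τ Rⁿ`, whence
`(1 + γτ) |eⁿ⁺¹|_∞ ≤ (1 + ζτ) |eⁿ|_∞ + τω`. For `ζ = γ` the error therefore grows by at most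
`τω/(1 + γτ)` per step, and `e⁰ = 0` gives `|eⁿ|_∞ ≤ nτω/(1 + γτ) ≤ Tω/(1 + γτ)`.
-/

open Real Finset

attribute [local instance] Matrix.linftyOpNormedAddCommGroup Matrix.linftyOpNormedSpace

namespace Matrix

variable {m n : Type*} [Fintype m] [Fintype n]

theorem sum_norm_le_linfty_opNorm (A : Matrix m n ℝ) (i : m) : ∑ j, ‖A i j‖ ≤ ‖A‖ := by
  have h := norm_le_pi_norm (fun i => WithLp.toLp 1 (A i)) i
  rw [PiLp.norm_eq_of_L1] at h
  exact h

theorem linfty_opNorm_le_iff {A : Matrix m n ℝ} {c : ℝ} (hc : 0 ≤ c) :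
    ‖A‖ ≤ c ↔ ∀ i, ∑ j, ‖A i j‖ ≤ c := by
  have h := pi_norm_le_iff_of_nonneg (x := fun i => WithLp.toLp 1 (A i)) hc
  simp only [PiLp.norm_eq_of_L1] at h
  exact h

theorem le_norm_smul_one_sub_smul_mul [DecidableEq m] {s c β : ℝ} (hc : 0 ≤ c)
    {B : Matrix m m ℝ} (hB : ‖B‖ ≤ β) (E : Matrix m n ℝ) :
    (s - c * β) * ‖E‖ ≤ ‖(s • 1 - c • B) * E‖ := by
  have hsE : s • E = (s • 1 - c • B) * E + c • (B * E) := by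
    rw [Matrix.sub_mul, Matrix.smul_mul, Matrix.smul_mul, Matrix.one_mul, sub_add_cancel]
  have hBE : ‖c • (B * E)‖ ≤ c * β * ‖E‖ := by
    rw [norm_smul, Real.norm_of_nonneg hc, mul_assoc]
    gcongr
    exact (linfty_opNorm_mul B E).trans (by gcongr)
  calc (s - c * β) * ‖E‖ ≤ ‖s • E‖ - c * β * ‖E‖ := by
        rw [norm_smul, sub_mul]
        gcongr
        exact le_abs_self s
    _ ≤ ‖(s • 1 - c • B) * E‖ := by
        rw [hsE]
        linarith [norm_add_le ((s • 1 - c • B) * E) (c • (B * E))]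

end Matrix

theorem matInfNorm_eq_norm {m n : ℕ} (M : Matrix (Fin m) (Fin n) ℝ) : matInfNorm M = ‖M‖ := by
  refine le_antisymm (Real.iSup_le (fun i => ?_) (norm_nonneg M)) ?_
  · simpa using M.sum_norm_le_linfty_opNorm i
  · refine (Matrix.linfty_opNorm_le_iff (Real.iSup_nonneg fun i => ?_)).2 fun i => ?_
    · positivity
    · simpa using le_ciSup (Finite.bddAbove_range fun i => ∑ j, |M i j|) i

/- Neighbour indices with reflection at the boundary (ghost points `u₋₁ = u₁`, `uₙ = uₙ₋₂`):
off the diagonal, row `i` of `neumannLaplacian n` is dominated by the indicators of these two. -/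
def neumannLeft (i : ℕ) : ℕ := if i = 0 then 1 else i - 1

def neumannRight (n i : ℕ) : ℕ := if i + 1 = n then n - 2 else i + 1

theorem abs_neumannLaplacian_add_two_le {n : ℕ} (i j : Fin n) :
    |(neumannLaplacian n + (2 : ℝ) • 1) i j| ≤
      (if (j : ℕ) = neumannLeft i then 1 else 0) +
        (if (j : ℕ) = neumannRight n i then 1 else 0) := by
  have hi := i.isLt
  have hj := j.isLt
  simp only [neumannLaplacian, neumannLeft, neumannRight, Matrix.add_apply, Matrix.smul_apply,
    Matrix.one_apply, Matrix.of_apply, Fin.ext_iff]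
  split_ifs <;> norm_num <;> omega

theorem sum_ite_val_eq_le_one {n : ℕ} (l : ℕ) :
    ∑ j : Fin n, (if (j : ℕ) = l then (1 : ℝ) else 0) ≤ 1 := by
  rw [Finset.sum_boole]
  refine Nat.cast_le_one.2 (Finset.card_le_one.2 fun a ha b hb => ?_)
  rw [Finset.mem_filter] at ha hb
  exact Fin.ext (ha.2.trans hb.2.symm)

theorem norm_neumannLaplacian_add_two_le (n : ℕ) : ‖neumannLaplacian n + (2 : ℝ) • 1‖ ≤ 2 := by
  refine (Matrix.linfty_opNorm_le_iff zero_le_two).2 fun i => ?_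
  calc ∑ j, ‖(neumannLaplacian n + (2 : ℝ) • 1) i j‖
      ≤ ∑ j : Fin n, ((if (j : ℕ) = neumannLeft i then 1 else 0) +
          (if (j : ℕ) = neumannRight n i then 1 else 0)) :=
        Finset.sum_le_sum fun j _ => abs_neumannLaplacian_add_two_le i j
    _ ≤ 1 + 1 := by
        rw [Finset.sum_add_distrib]
        exact add_le_add (sum_ite_val_eq_le_one _) (sum_ite_val_eq_le_one _)
    _ = 2 := one_add_one_eq_two

theorem le_norm_smul_one_sub_smul_neumannLaplacian_mul {m n : ℕ} {a c : ℝ} (hc : 0 ≤ c)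
    (E : Matrix (Fin m) (Fin n) ℝ) :
    a * ‖E‖ ≤ ‖(a • 1 - c • neumannLaplacian m) * E‖ := by
  have hA : a • 1 - c • neumannLaplacian m
      = (a + c * 2) • 1 - c • (neumannLaplacian m + (2 : ℝ) • 1) := by
    rw [smul_add, smul_smul, add_smul]; abel
  simpa [hA] using
    Matrix.le_norm_smul_one_sub_smul_mul (s := a + c * 2) hc (norm_neumannLaplacian_add_two_le m) E

theorem mul_norm_sub_le_of_imex_step {m n : Type*} [Fintype m] [Fintype n] {A : Matrix m m ℝ}
    {N : Matrix m n ℝ → Matrix m n ℝ} {a ζ τ ω : ℝ} (hτ : 0 ≤ τ)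
    (hA : ∀ E : Matrix m n ℝ, a * ‖E‖ ≤ ‖A * E‖) (hN : ∀ V U, ‖N V - N U‖ ≤ ζ * ‖V - U‖)
    {V W V' W' G R : Matrix m n ℝ} (hR : ‖R‖ ≤ ω)
    (hV : A * V' = V + τ • N V + τ • G) (hW : A * W' = W + τ • N W + τ • G + τ • R) :
    a * ‖V' - W'‖ ≤ (1 + τ * ζ) * ‖V - W‖ + τ * ω := by
  have hdiff : A * (V' - W') = (V - W) + τ • (N V - N W) - τ • R := by
    rw [Matrix.mul_sub, hV, hW, smul_sub]
    abel
  calc a * ‖V' - W'‖ ≤ ‖(V - W) + τ • (N V - N W) - τ • R‖ := by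
        rw [← hdiff]; exact hA _
    _ ≤ ‖V - W‖ + τ * ‖N V - N W‖ + τ * ‖R‖ := by
        refine (norm_sub_le _ _).trans (add_le_add ((norm_add_le _ _).trans ?_) ?_) <;>
          simp only [norm_smul, Real.norm_of_nonneg hτ, le_refl]
    _ ≤ ‖V - W‖ + τ * (ζ * ‖V - W‖) + τ * ω := by gcongr; exact hN V W
    _ = (1 + τ * ζ) * ‖V - W‖ + τ * ω := by ring

theorem le_natCast_mul_of_le_add {x : ℕ → ℝ} {d : ℝ} (h0 : x 0 = 0)
    (hstep : ∀ k, x (k + 1) ≤ x k + d) : ∀ n : ℕ, x n ≤ n * d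
  | 0 => by simp [h0]
  | n + 1 => by
    push_cast
    linarith [hstep n, le_natCast_mul_of_le_add h0 hstep n]

theorem IMEX_convergence_critical_general (nξ nx : ℕ)
    (γ ν τ hξ ζ ω : ℝ) (hγ : 0 < γ) (hν : 0 < ν) (hτ : 0 < τ)
    (hω : 0 ≤ ω)
    (A : Matrix (Fin nξ) (Fin nξ) ℝ)
    (hA : A = (1 + γ * τ) • (1 : Matrix (Fin nξ) (Fin nξ) ℝ)
            - (τ * ν / hξ ^ 2) • neumannLaplacian nξ)
    (N : Matrix (Fin nξ) (Fin nx) ℝ → Matrix (Fin nξ) (Fin nx) ℝ)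
    (hN : ∀ V U, matInfNorm (N V - N U) ≤ ζ * matInfNorm (V - U))
    (V Vs G R : ℕ → Matrix (Fin nξ) (Fin nx) ℝ)
    (h0 : V 0 = Vs 0)
    (hV : ∀ n : ℕ, A * V (n + 1) = V n + τ • N (V n) + τ • G n)
    (hVs : ∀ n : ℕ, A * Vs (n + 1) = Vs n + τ • N (Vs n) + τ • G n + τ • R n)
    (hR : ∀ n : ℕ, matInfNorm (R n) ≤ ω)
    (hζγ : ζ = γ) (nt : ℕ) (T : ℝ) (hT : T = nt * τ) :
    ∀ n : ℕ, 1 ≤ n → n ≤ nt →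
      matInfNorm (V n - Vs n) ≤ T * ω / (1 + γ * τ) := by
  simp only [matInfNorm_eq_norm, hζγ] at hN hR ⊢
  have ha : 0 < 1 + γ * τ := by positivity
  have hcoercive : ∀ E : Matrix (Fin nξ) (Fin nx) ℝ, (1 + γ * τ) * ‖E‖ ≤ ‖A * E‖ := fun E =>
    hA ▸ le_norm_smul_one_sub_smul_neumannLaplacian_mul (by positivity) E
  have hstep : ∀ k, ‖V (k + 1) - Vs (k + 1)‖ ≤ ‖V k - Vs k‖ + τ * ω / (1 + γ * τ) := by
    intro k
    have h := mul_norm_sub_le_of_imex_step hτ.le hcoercive hN (hR k) (hV k) (hVs k)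
    rw [mul_comm τ γ] at h
    rw [add_div' _ _ _ ha.ne', le_div_iff₀ ha]
    linarith
  intro n _ hn
  calc ‖V n - Vs n‖ ≤ n * (τ * ω / (1 + γ * τ)) :=
        le_natCast_mul_of_le_add (x := fun k => ‖V k - Vs k‖) (by simp [h0]) hstep n
    _ ≤ nt * (τ * ω / (1 + γ * τ)) := by gcongr
    _ = T * ω / (1 + γ * τ) := by rw [hT]; ring

/-- (Convergence of the IMEX scheme, case `ζ = γ`.)
`|Vⁿ - V*ⁿ|_∞ ≤ T ω/(1 + γτ)` for `1 ≤ n ≤ n_t`, where `T = n_t τ`. -/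
theorem IMEX_convergence_critical (nξ nx : ℕ) (hnξ : 2 ≤ nξ) (hnx : 1 ≤ nx)
    (γ ν τ hξ ζ ω : ℝ) (hγ : 0 < γ) (hν : 0 < ν) (hτ : 0 < τ) (hhξ : 0 < hξ)
    (hζ : 0 ≤ ζ) (hω : 0 ≤ ω)
    (A : Matrix (Fin nξ) (Fin nξ) ℝ)
    (hA : A = (1 + γ * τ) • (1 : Matrix (Fin nξ) (Fin nξ) ℝ)
            - (τ * ν / hξ ^ 2) • neumannLaplacian nξ)
    (N : Matrix (Fin nξ) (Fin nx) ℝ → Matrix (Fin nξ) (Fin nx) ℝ)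
    (hN : ∀ V U, matInfNorm (N V - N U) ≤ ζ * matInfNorm (V - U))
    (V Vs G R : ℕ → Matrix (Fin nξ) (Fin nx) ℝ)
    (h0 : V 0 = Vs 0)
    (hV : ∀ n : ℕ, A * V (n + 1) = V n + τ • N (V n) + τ • G n)
    (hVs : ∀ n : ℕ, A * Vs (n + 1) = Vs n + τ • N (Vs n) + τ • G n + τ • R n)
    (hR : ∀ n : ℕ, matInfNorm (R n) ≤ ω)
    (hζγ : ζ = γ) (nt : ℕ) (T : ℝ) (hT : T = nt * τ) :
    ∀ n : ℕ, 1 ≤ n → n ≤ nt →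
      matInfNorm (V n - Vs n) ≤ T * ω / (1 + γ * τ) :=
  IMEX_convergence_critical_general nξ nx γ ν τ hξ ζ ω hγ hν hτ hω A hA N hN V Vs G R h0 hV hVs hR
    hζγ nt T hT
end

section
/- Let γ, ν > 0, ξ₀ ∈ ℝ, s₀ ∈ ℝ (representing S'(0)), let w : ℝ → ℝ be integrable with w(−y) = w(y), let λ > −γ be real and p ∈ ℝ, and set ψ = √((γ+λ)/ν). Then the complex-valued function V(x,t) = e^{λt} e^{ipx} satisfies the linearized evolution equation V(x,t) = s₀ ∫_{−∞}^{t} Θ(ξ₀, t−s) ( ∫_ℝ w(x−x') V(x',s) dx' ) ds for all x ∈ ℝ and t ∈ ℝ, where Θ(ξ,u) = e^{−γu} e^{−ξ²/(4νu)}/√(4πνu) for u > 0, if and only if 1 = s₀ ŵ(p) exp(−ψ|ξ₀|)/(2ψν), where ŵ(p) = ∫_ℝ w(y) e^{−ipy} dy. -/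
open Real MeasureTheory Set

/-!
For the plane wave `V`, the spatial integral is a convolution with a character and produces the
factor `ŵ(p)`, while the substitution `u = t - s` turns the time integral into the Laplace
transform `∫₀^∞ Θ(ξ₀, u) e^{-λu} du`. So the right-hand side is `s₀ ŵ(p)` times that transform
times `V` itself, and since `V` never vanishes the equation holds iff this factor is `1`.

The transform is `∫₀^∞ e^{-au - b/u} u^{-1/2} du = √(π/a) e^{-2√(ab)}`. After `u = x²` the exponent
becomes `-a (x - c/x)² - 2√(ab)` with `c = √(b/a)`, and `∫₀^∞ e^{-a (x - c/x)²} dx` is the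
half-line Gaussian integral by the Cauchy–Schlömilch trick: the inversion `x ↦ c/x` shows
`∫ g = ∫ (c/x²) g`, and `y = x - c/x` maps `(0, ∞)` onto `ℝ` with `dy = (1 + c/x²) dx`.
-/

variable {E : Type*} [NormedAddCommGroup E] [NormedSpace ℝ E]

section Substitutions

variable {c : ℝ}

theorem hasDerivAt_const_div {x : ℝ} (hx : x ≠ 0) :
    HasDerivAt (fun x => c / x) (-(c / x ^ 2)) x := by
  simpa [div_eq_mul_inv, mul_comm] using (hasDerivAt_inv hx).const_mul c

theorem image_const_div_Ioi_zero (hc : 0 < c) : (fun x => c / x) '' Ioi 0 = Ioi 0 :=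
  eq_of_subset_of_subset (image_subset_iff.2 fun _ hx => div_pos hc hx)
    fun y hy => ⟨c / y, div_pos hc hy, div_div_cancel₀ hc.ne'⟩

theorem strictAntiOn_const_div (hc : 0 < c) : StrictAntiOn (fun x => c / x) (Ioi 0) :=
  fun _ hx _ _ hxy => div_lt_div_of_pos_left hc hx hxy

theorem integral_Ioi_div_sq_smul_comp_const_div (hc : 0 < c) (f : ℝ → E) :
    ∫ x in Ioi 0, (c / x ^ 2) • f (c / x) = ∫ x in Ioi 0, f x := by
  conv_rhs => rw [← image_const_div_Ioi_zero hc]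
  rw [integral_image_eq_integral_abs_deriv_smul measurableSet_Ioi
    (fun x hx => (hasDerivAt_const_div (ne_of_gt hx)).hasDerivWithinAt)
    (strictAntiOn_const_div hc).injOn]
  refine setIntegral_congr_fun measurableSet_Ioi fun x (hx : 0 < x) => ?_
  rw [abs_neg, abs_of_pos (by positivity)]

theorem hasDerivAt_sub_div {x : ℝ} (hx : x ≠ 0) :
    HasDerivAt (fun x => x - c / x) (1 + c / x ^ 2) x := by
  rw [← sub_neg_eq_add]
  exact (hasDerivAt_id' x).sub (hasDerivAt_const_div hx)

theorem strictMonoOn_sub_div (hc : 0 < c) : StrictMonoOn (fun x => x - c / x) (Ioi 0) :=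
  fun _ hx _ _ hxy => sub_lt_sub hxy (strictAntiOn_const_div hc hx (lt_trans hx hxy) hxy)

theorem image_sub_div_Ioi_zero (hc : 0 < c) : (fun x => x - c / x) '' Ioi 0 = univ := by
  refine eq_univ_of_forall fun y => ?_
  set r := √(y ^ 2 + 4 * c)
  have hr : r ^ 2 = y ^ 2 + 4 * c := sq_sqrt (by positivity)
  have hyr : 0 < y + r := by
    have : |y| < r := by
      rw [← sqrt_sq_eq_abs]
      exact sqrt_lt_sqrt (sq_nonneg y) (by linarith)
    linarith [neg_abs_le y]
  refine ⟨(y + r) / 2, by rw [mem_Ioi]; positivity, ?_⟩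
  field_simp
  linear_combination hr

theorem integral_Ioi_one_add_div_sq_smul_comp_sub_div (hc : 0 < c) (f : ℝ → E) :
    ∫ x in Ioi 0, (1 + c / x ^ 2) • f (x - c / x) = ∫ y, f y := by
  rw [eq_comm, ← setIntegral_univ, ← image_sub_div_Ioi_zero hc,
    integral_image_eq_integral_abs_deriv_smul measurableSet_Ioi
      (fun x hx => (hasDerivAt_sub_div (ne_of_gt hx)).hasDerivWithinAt)
      (strictMonoOn_sub_div hc).injOn]
  refine setIntegral_congr_fun measurableSet_Ioi fun x (hx : 0 < x) => ?_
  rw [abs_of_pos (by positivity)]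

theorem integrableOn_Ioi_one_add_div_sq_smul_comp_sub_div_iff (hc : 0 < c) (f : ℝ → E) :
    IntegrableOn (fun x => (1 + c / x ^ 2) • f (x - c / x)) (Ioi 0) ↔ Integrable f := by
  rw [← integrableOn_univ, ← image_sub_div_Ioi_zero hc,
    integrableOn_image_iff_integrableOn_abs_deriv_smul measurableSet_Ioi
      (fun x hx => (hasDerivAt_sub_div (ne_of_gt hx)).hasDerivWithinAt)
      (strictMonoOn_sub_div hc).injOn]
  refine integrableOn_congr_fun (fun x (hx : 0 < x) => ?_) measurableSet_Ioi
  rw [abs_of_pos (by positivity)]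

end Substitutions

theorem integral_Ioi_exp_neg_mul_sub_div_sq {a c : ℝ} (ha : 0 < a) (hc : 0 ≤ c) :
    ∫ x in Ioi 0, exp (-a * (x - c / x) ^ 2) = √(π / a) / 2 := by
  rcases hc.eq_or_lt with rfl | hc
  · simpa using integral_gaussian_Ioi a
  set g : ℝ → ℝ := fun x => exp (-a * (x - c / x) ^ 2)
  have hinv : ∫ x in Ioi 0, c / x ^ 2 * g x = ∫ x in Ioi 0, g x := by
    rw [← integral_Ioi_div_sq_smul_comp_const_div hc g]
    refine setIntegral_congr_fun measurableSet_Ioi fun x (hx : 0 < x) => ?_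
    simp only [g, smul_eq_mul]
    congr 3
    field_simp
    ring
  have hsum : IntegrableOn (fun x => (1 + c / x ^ 2) * g x) (Ioi 0) :=
    (integrableOn_Ioi_one_add_div_sq_smul_comp_sub_div_iff hc _).2 (integrable_exp_neg_mul_sq ha)
  have hg : IntegrableOn g (Ioi 0) := hsum.mono' (by fun_prop) <| ae_of_all _ fun x => by
    rw [norm_of_nonneg (exp_pos _).le]
    exact le_mul_of_one_le_left (exp_pos _).le (le_add_of_nonneg_right (by positivity))
  have hcg : IntegrableOn (fun x => c / x ^ 2 * g x) (Ioi 0) :=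
    hsum.mono' (by fun_prop) <| ae_of_all _ fun x => by
      rw [norm_of_nonneg (by positivity)]
      exact mul_le_mul_of_nonneg_right (by linarith) (exp_pos _).le
  calc ∫ x in Ioi 0, g x = ((∫ x in Ioi 0, g x) + ∫ x in Ioi 0, c / x ^ 2 * g x) / 2 := by
        rw [hinv]; ring
    _ = (∫ x in Ioi 0, (1 + c / x ^ 2) * g x) / 2 := by
        rw [← integral_add hg hcg]; simp only [add_mul, one_mul]
    _ = √(π / a) / 2 := by
        simp_rw [← smul_eq_mul, g, integral_Ioi_one_add_div_sq_smul_comp_sub_div hc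
          (fun y => exp (-a * y ^ 2)), integral_gaussian]

theorem integral_Ioi_exp_neg_mul_sub_div_div_sqrt {a b : ℝ} (ha : 0 < a) (hb : 0 ≤ b) :
    ∫ u in Ioi 0, exp (-a * u - b / u) / √u = √(π / a) * exp (-2 * √(a * b)) := by
  set c := √(b / a)
  have hac2 : a * c ^ 2 = b := by
    rw [sq_sqrt (by positivity)]
    field_simp
  have hac : a * c = √(a * b) := by
    rw [← hac2, ← mul_assoc, ← sq, sqrt_mul (sq_nonneg a), sqrt_sq ha.le, sqrt_sq (sqrt_nonneg _)]
  have hpoint : ∀ x ∈ Ioi (0 : ℝ),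
      (2 * x ^ ((2 : ℝ) - 1)) • (exp (-a * x ^ (2 : ℝ) - b / x ^ (2 : ℝ)) / √(x ^ (2 : ℝ)))
        = 2 * exp (-2 * √(a * b)) * exp (-a * (x - c / x) ^ 2) := fun x (hx : 0 < x) => by
    have hsplit : exp (-a * x ^ 2 - b / x ^ 2)
        = exp (-2 * √(a * b)) * exp (-a * (x - c / x) ^ 2) := by
      rw [← exp_add, ← hac, ← hac2]
      congr 1
      field_simp
      ring
    rw [rpow_two, sqrt_sq hx.le, show (2 : ℝ) - 1 = 1 by norm_num, rpow_one, smul_eq_mul, hsplit]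
    field_simp
  rw [← integral_comp_rpow_Ioi_of_pos two_pos, setIntegral_congr_fun measurableSet_Ioi hpoint,
    integral_const_mul, integral_Ioi_exp_neg_mul_sub_div_sq ha (sqrt_nonneg _)]
  ring

theorem integral_Ioi_exp_neg_mul_mul_heatKernel {μ ν : ℝ} (hμ : 0 < μ) (hν : 0 < ν) (ξ : ℝ) :
    ∫ u in Ioi 0, exp (-μ * u) * exp (-ξ ^ 2 / (4 * ν * u)) / √(4 * π * ν * u)
      = exp (-(√(μ / ν) * |ξ|)) / (2 * √(μ / ν) * ν) := by
  set ψ := √(μ / ν)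
  have hψ : 0 < ψ := sqrt_pos.2 (div_pos hμ hν)
  have hψ2 : ψ ^ 2 = μ / ν := sq_sqrt (div_pos hμ hν).le
  have hpoint : ∀ u ∈ Ioi (0 : ℝ), exp (-μ * u) * exp (-ξ ^ 2 / (4 * ν * u)) / √(4 * π * ν * u)
      = (√(4 * π * ν))⁻¹ * (exp (-μ * u - ξ ^ 2 / (4 * ν) / u) / √u) := fun u (hu : 0 < u) => by
    rw [sqrt_mul (by positivity), ← exp_add]
    field_simp
    ring_nf
  have hexponent : √(μ * (ξ ^ 2 / (4 * ν))) = ψ * |ξ| / 2 := by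
    rw [sqrt_eq_iff_eq_sq (by positivity) (by positivity), div_pow, mul_pow, hψ2, sq_abs]
    field_simp
    norm_num
  have hnormalization : √(4 * π * ν) = 2 * ψ * ν * √(π / μ) := by
    rw [sqrt_eq_iff_eq_sq (by positivity) (by positivity), mul_pow, mul_pow, mul_pow, hψ2,
      sq_sqrt (by positivity)]
    field_simp
    norm_num
  rw [setIntegral_congr_fun measurableSet_Ioi hpoint, integral_const_mul,
    integral_Ioi_exp_neg_mul_sub_div_div_sqrt hμ (by positivity), hexponent, hnormalization]
  field_simp

theorem integral_Iio_comp_sub_left (f : ℝ → E) (t : ℝ) :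
    ∫ s in Iio t, f (t - s) = ∫ u in Ioi 0, f u := by
  simpa [Homeomorph.subLeft] using (volume.measurePreserving_sub_left t).setIntegral_preimage_emb
    (Homeomorph.subLeft t).measurableEmbedding f (Ioi 0)

theorem integral_Iio_mul_cexp (k : ℝ → ℝ) (lam t : ℝ) :
    ∫ s in Iio t, (k (t - s) : ℂ) * Complex.exp (lam * s : ℝ)
      = (∫ u in Ioi 0, k u * exp (-(lam * u)) : ℝ) * Complex.exp (lam * t : ℝ) := by
  have hpoint : ∀ s : ℝ, (k (t - s) : ℂ) * Complex.exp (lam * s : ℝ)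
      = ((exp (lam * t) * (k (t - s) * exp (-(lam * (t - s))))) : ℝ) := fun s => by
    push_cast [Complex.ofReal_exp]
    rw [mul_left_comm, ← Complex.exp_add]
    ring_nf
  simp_rw [hpoint]
  rw [integral_complex_ofReal, integral_const_mul,
    integral_Iio_comp_sub_left (fun u => k u * exp (-(lam * u)))]
  push_cast
  ring

theorem integral_comp_sub_mul_cexp (f : ℝ → ℂ) (p x : ℝ) :
    ∫ x', f (x - x') * Complex.exp (Complex.I * p * x')
      = Complex.exp (Complex.I * p * x) * ∫ y, f y * Complex.exp (-(Complex.I * p * y)) := by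
  rw [← integral_const_mul, ← integral_sub_left_eq_self _ volume x]
  congr with x'
  rw [mul_left_comm, ← Complex.exp_add]
  push_cast
  ring_nf

theorem integral_Iio_mul_integral_comp_sub_mul_planeWave (k : ℝ → ℝ) (f : ℝ → ℂ)
    (lam p x t : ℝ) :
    ∫ s in Iio t, (k (t - s) : ℂ) *
        ∫ x', f (x - x') * (Complex.exp (lam * s : ℝ) * Complex.exp (Complex.I * p * x'))
      = (∫ u in Ioi 0, k u * exp (-(lam * u)) : ℝ) *
          (∫ y, f y * Complex.exp (-(Complex.I * p * y))) *
          (Complex.exp (lam * t : ℝ) * Complex.exp (Complex.I * p * x)) := by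
  have hspace : ∀ s : ℝ,
      ∫ x', f (x - x') * (Complex.exp (lam * s : ℝ) * Complex.exp (Complex.I * p * x'))
        = Complex.exp (lam * s : ℝ) *
            (Complex.exp (Complex.I * p * x) * ∫ y, f y * Complex.exp (-(Complex.I * p * y))) := by
    intro s
    rw [← integral_comp_sub_mul_cexp, ← integral_const_mul]
    congr with x'
    ring
  simp_rw [hspace, ← mul_assoc, integral_mul_const, integral_Iio_mul_cexp]
  ring

theorem linearized_dispersion_relation_general (γ ν : ℝ) (hν : 0 < ν)
    (ξ₀ s₀ : ℝ) (w : ℝ → ℝ)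
    (lam : ℝ) (hlam : -γ < lam) (p : ℝ)
    (ψ : ℝ) (hψ : ψ = Real.sqrt ((γ + lam) / ν))
    (Θ : ℝ → ℝ → ℝ)
    (hΘ : ∀ ξ u : ℝ, 0 < u → Θ ξ u
        = Real.exp (-γ * u) * Real.exp (-ξ ^ 2 / (4 * ν * u)) / Real.sqrt (4 * π * ν * u)) :
    ((∀ x t : ℝ,
        Complex.exp ((lam * t : ℝ)) * Complex.exp (Complex.I * p * x)
          = (s₀ : ℂ) * ∫ s in Set.Iio t, (Θ ξ₀ (t - s) : ℂ) *
              ∫ x' : ℝ, (w (x - x') : ℂ) *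
                (Complex.exp ((lam * s : ℝ)) * Complex.exp (Complex.I * p * x')))
      ↔ (1 : ℂ) = (s₀ : ℂ) * (∫ y : ℝ, (w y : ℂ) * Complex.exp (-(Complex.I * p * y)))
            * Complex.exp ((-(ψ * |ξ₀|) : ℝ)) / (2 * ψ * ν)) := by
  have hlaplace : ∫ u in Ioi 0, Θ ξ₀ u * exp (-(lam * u)) = exp (-(ψ * |ξ₀|)) / (2 * ψ * ν) := by
    rw [hψ, ← integral_Ioi_exp_neg_mul_mul_heatKernel (by linarith : 0 < γ + lam) hν ξ₀]
    refine setIntegral_congr_fun measurableSet_Ioi fun u (hu : 0 < u) => ?_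
    rw [hΘ ξ₀ u hu, show -(γ + lam) * u = -γ * u + -(lam * u) by ring, exp_add]
    ring
  have hfactor : ∀ ŵ V : ℂ, (s₀ : ℂ) * (((exp (-(ψ * |ξ₀|)) / (2 * ψ * ν) : ℝ) : ℂ) * ŵ * V)
      = s₀ * ŵ * Complex.exp ((-(ψ * |ξ₀|) : ℝ)) / (2 * ψ * ν) * V := fun ŵ V => by
    push_cast
    ring
  simp only [integral_Iio_mul_integral_comp_sub_mul_planeWave (Θ ξ₀) (fun y => (w y : ℂ)),
    hlaplace, hfactor]
  exact ⟨fun h => by simpa using h 0 0, fun h x t => by rw [← h, one_mul]⟩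

/-- The plane-wave ansatz `V(x,t) = e^{λt} e^{ipx}` solves the linearized
dendritic neural field equation
`V(x,t) = s₀ ∫_{-∞}^t Θ(ξ₀, t-s) ∫_ℝ w(x-x') V(x',s) dx' ds`
if and only if the dispersion relation
`1 = s₀ ŵ(p) exp(-ψ|ξ₀|)/(2ψν)` holds, where `ψ = √((γ+λ)/ν)` and
`Θ(ξ,u) = e^{-γu} e^{-ξ²/(4νu)}/√(4πνu)`. -/
theorem linearized_dispersion_relation (γ ν : ℝ) (hγ : 0 < γ) (hν : 0 < ν)
    (ξ₀ s₀ : ℝ) (w : ℝ → ℝ) (hw : Integrable w) (heven : ∀ y : ℝ, w (-y) = w y)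
    (lam : ℝ) (hlam : -γ < lam) (p : ℝ)
    (ψ : ℝ) (hψ : ψ = Real.sqrt ((γ + lam) / ν))
    (Θ : ℝ → ℝ → ℝ)
    (hΘ : ∀ ξ u : ℝ, 0 < u → Θ ξ u
        = Real.exp (-γ * u) * Real.exp (-ξ ^ 2 / (4 * ν * u)) / Real.sqrt (4 * π * ν * u)) :
    ((∀ x t : ℝ,
        Complex.exp ((lam * t : ℝ)) * Complex.exp (Complex.I * p * x)
          = (s₀ : ℂ) * ∫ s in Set.Iio t, (Θ ξ₀ (t - s) : ℂ) *
              ∫ x' : ℝ, (w (x - x') : ℂ) *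
                (Complex.exp ((lam * s : ℝ)) * Complex.exp (Complex.I * p * x')))
      ↔ (1 : ℂ) = (s₀ : ℂ) * (∫ y : ℝ, (w y : ℂ) * Complex.exp (-(Complex.I * p * y)))
            * Complex.exp ((-(ψ * |ξ₀|) : ℝ)) / (2 * ψ * ν)) :=
  linearized_dispersion_relation_general γ ν hν ξ₀ s₀ w lam hlam p ψ hψ Θ hΘ
end
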